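/- Let m be a real number with 0 < m ≤ 1 and define R_m(k₁, k₂) = 4·(cos²(k₁/2)·sin²(k₂/2) + sin²(k₁/2)·cos²(k₂/2))^(3/2) / (m·(sin²(k₁/2) + sin²(k₂/2))). Then for every fixed k₂ with 2·arccos(√(m/2)) ≤ k₂ ≤ 2·arccos(m/2), the function k₁ ↦ R_m(k₁, k₂) is strictly decreasing on the interval [0, π]. -/

import Mathlib

/-!
Write `x = sin²(k₁/2)`, `s = sin²(k₂/2)` and `c = cos²(k₂/2)`. Then
`R_m = (4/m) · ((1 - x) s + x c)^(3/2) / (x + s)`, and `x` increases strictly with `k₁ ∈ [0, π]`.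
The hypotheses on `k₂` give `c ≤ m/2 ≤ 1/2 ≤ s`, so the numerator is non-increasing in `x`
while the denominator increases strictly.
-/

open Real Set

/-- Curvature radius `R_m(k₁,k₂)` of the level curve `{2 cos(k₁/2) cos(k₂/2) = m}`
(Proposition 8.1). -/
noncomputable def curvRadius (m k₁ k₂ : ℝ) : ℝ :=
  4 * (Real.cos (k₁ / 2) ^ 2 * Real.sin (k₂ / 2) ^ 2
        + Real.sin (k₁ / 2) ^ 2 * Real.cos (k₂ / 2) ^ 2) ^ ((3 : ℝ) / 2) /
    (m * (Real.sin (k₁ / 2) ^ 2 + Real.sin (k₂ / 2) ^ 2))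

lemma cos_sq_le_of_arccos_sqrt_le {y θ : ℝ} (hy₀ : 0 ≤ y) (hy₁ : y ≤ 1)
    (hθ : arccos √y ≤ θ) (hθ' : θ ≤ π / 2) : cos θ ^ 2 ≤ y := by
  have hcos_le : cos θ ≤ √y := by
    have h := cos_le_cos_of_nonneg_of_le_pi (arccos_nonneg _) (by linarith [pi_pos]) hθ
    rwa [cos_arccos (by linarith [sqrt_nonneg y]) (sqrt_le_one.mpr hy₁)] at h
  have hcos_nonneg : 0 ≤ cos θ :=
    cos_nonneg_of_neg_pi_div_two_le_of_le (by linarith [arccos_nonneg √y, pi_pos]) hθ'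
  exact (le_sqrt hcos_nonneg hy₀).mp hcos_le

lemma strictMonoOn_sin_half_sq : StrictMonoOn (fun x => sin (x / 2) ^ 2) (Icc 0 π) := by
  intro a ha b hb hab
  have hsin : sin (a / 2) < sin (b / 2) :=
    strictMonoOn_sin ⟨by linarith [ha.1, pi_pos], by linarith [ha.2]⟩
      ⟨by linarith [hb.1, pi_pos], by linarith [hb.2]⟩ (by linarith)
  exact pow_lt_pow_left₀ hsin
    (sin_nonneg_of_nonneg_of_le_pi (by linarith [ha.1]) (by linarith [ha.2, pi_pos])) two_ne_zero

lemma strictAntiOn_interp_rpow_div_add {s c p : ℝ} (hs : 0 < s) (hc : 0 ≤ c) (hcs : c ≤ s)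
    (hp : 0 ≤ p) :
    StrictAntiOn (fun x => ((1 - x) * s + x * c) ^ p / (x + s)) (Icc 0 1) := by
  intro a ha b hb hab
  have hBb : 0 ≤ (1 - b) * s + b * c :=
    add_nonneg (mul_nonneg (by linarith [hb.2]) hs.le) (mul_nonneg hb.1 hc)
  have hBa : 0 < (1 - a) * s + a * c :=
    add_pos_of_pos_of_nonneg (mul_pos (by linarith [hb.2]) hs) (mul_nonneg ha.1 hc)
  have hBab : (1 - b) * s + b * c ≤ (1 - a) * s + a * c := by nlinarith
  exact div_lt_div₀' (rpow_le_rpow hBb hBab hp) (by linarith) (rpow_pos_of_pos hBa p)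
    (by linarith [ha.1])

/-- For `0 < m ≤ 1` and `k₂` in the stated interval, the curvature radius
`k₁ ↦ R_m(k₁, k₂)` is strictly decreasing on `[0, π]` (Proposition 8.1). -/
theorem curvRadius_strictAntiOn
    (m : ℝ) (hm0 : 0 < m) (hm1 : m ≤ 1) (k₂ : ℝ)
    (hk₂l : 2 * Real.arccos (Real.sqrt (m / 2)) ≤ k₂)
    (hk₂u : k₂ ≤ 2 * Real.arccos (m / 2)) :
    StrictAntiOn (fun k₁ => curvRadius m k₁ k₂) (Set.Icc 0 Real.pi) := by
  have hk₂_half : k₂ / 2 ≤ π / 2 := by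
    linarith [arccos_le_pi_div_two.mpr (by linarith : (0 : ℝ) ≤ m / 2)]
  have hc : cos (k₂ / 2) ^ 2 ≤ m / 2 :=
    cos_sq_le_of_arccos_sqrt_le (by linarith) (by linarith) (by linarith) hk₂_half
  have hcs : cos (k₂ / 2) ^ 2 ≤ sin (k₂ / 2) ^ 2 := by linarith [sin_sq_add_cos_sq (k₂ / 2)]
  have hs : 0 < sin (k₂ / 2) ^ 2 := by linarith [sin_sq_add_cos_sq (k₂ / 2)]
  have hg := StrictAntiOn.comp_strictMonoOn
    (strictAntiOn_interp_rpow_div_add (p := 3 / 2) hs (sq_nonneg _) hcs (by norm_num))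
    strictMonoOn_sin_half_sq fun x _ => ⟨sq_nonneg (sin (x / 2)), sin_sq_le_one _⟩
  intro a ha b hb hab
  simp only [curvRadius, cos_sq' (a / 2), cos_sq' (b / 2), mul_div_mul_comm (4 : ℝ) _ m]
  exact mul_lt_mul_of_pos_left (hg ha hb hab) (by positivity)
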